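/- If D is a circum generalized Euclidean distance matrix built from L with parameters a, b (so that 1'D†1 > 0), then D† = -(1/(2ab))L† + (1/(1'D†1))(D†1)(1'D†). -/

import Mathlib

/-!
Let `P = I - J/n` be the orthogonal projection onto `1ᗮ`. It annihilates the rank-one parts
`a² L̃J` and `b² JL̃` of `D` and fixes `L` (as `L1 = 0`), so `P D P = -2ab L`.
Positive semidefiniteness of `L` (with `tr L > 0`) forces `1` into the column and row spaces of `D`,
and for any matrix with this property and `1ᵀD†1 ≠ 0` one checks the four Penrose equations for
`(P D P)† = D† - (1ᵀD†1)⁻¹ D†11ᵀD†`. Uniqueness of the Moore-Penrose inverse then gives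
`L† = -2ab (D† - (1ᵀD†1)⁻¹ D†11ᵀD†)`.
-/

open Matrix

/-- `Dp` is the Moore-Penrose inverse of `D`. -/
def IsMoorePenrose {n : ℕ} (D Dp : Matrix (Fin n) (Fin n) ℝ) : Prop :=
  D * Dp * D = D ∧ Dp * D * Dp = Dp ∧ (D * Dp)ᵀ = D * Dp ∧ (Dp * D)ᵀ = Dp * D

namespace IsMoorePenrose

variable {n : ℕ} {A X Y : Matrix (Fin n) (Fin n) ℝ}

theorem unique (hX : IsMoorePenrose A X) (hY : IsMoorePenrose A Y) : X = Y := by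
  have hAX : A * X = A * Y :=
    calc A * X = A * Y * (A * X) := by rw [← mul_assoc, hY.1]
      _ = (A * Y)ᵀ * (A * X)ᵀ := by rw [hY.2.2.1, hX.2.2.1]
      _ = (A * X * (A * Y))ᵀ := (transpose_mul _ _).symm
      _ = A * Y := by rw [← mul_assoc, hX.1, hY.2.2.1]
  have hXA : X * A = Y * A :=
    calc X * A = X * A * (Y * A) := by rw [mul_assoc X A, ← mul_assoc A Y A, hY.1]
      _ = (X * A)ᵀ * (Y * A)ᵀ := by rw [hY.2.2.2, hX.2.2.2]
      _ = (Y * A * (X * A))ᵀ := (transpose_mul _ _).symm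
      _ = Y * A := by rw [mul_assoc Y A, ← mul_assoc A X A, hX.1, hY.2.2.2]
  calc X = X * A * X := hX.2.1.symm
    _ = Y * A * Y := by rw [mul_assoc, hAX, ← mul_assoc, hXA]
    _ = Y := hY.2.1

theorem transpose (h : IsMoorePenrose A X) : IsMoorePenrose Aᵀ Xᵀ := by
  obtain ⟨h₁, h₂, h₃, h₄⟩ := h
  refine ⟨?_, ?_, ?_, ?_⟩
  · rw [← transpose_mul, ← transpose_mul, ← mul_assoc, h₁]
  · rw [← transpose_mul, ← transpose_mul, ← mul_assoc, h₂]
  · rw [← transpose_mul, h₄, h₄]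
  · rw [← transpose_mul, h₃, h₃]

theorem smul (h : IsMoorePenrose A X) {k : ℝ} (hk : k ≠ 0) :
    IsMoorePenrose (k • A) (k⁻¹ • X) := by
  obtain ⟨h₁, h₂, h₃, h₄⟩ := h
  refine ⟨?_, ?_, ?_, ?_⟩ <;> simp [smul_smul, hk, h₁, h₂, h₃, h₄]

theorem mul_mulVec_eq_self (h : IsMoorePenrose A X) {z : Fin n → ℝ}
    (hz : ∀ y, y ᵥ* A = 0 → y ⬝ᵥ z = 0) : (A * X) *ᵥ z = z := by
  set r := z - (A * X) *ᵥ z with hr_def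
  have hr : r ᵥ* A = 0 := by
    rw [sub_vecMul, vecMul_mulVec, h.2.2.1, h.1, sub_self]
  have hrr : r ⬝ᵥ r = 0 := by
    conv_lhs => rw [hr_def, dotProduct_sub r z]
    rw [hz r hr, ← mulVec_mulVec, dotProduct_mulVec, hr, zero_dotProduct, sub_self]
  exact (sub_eq_zero.mp (dotProduct_self_eq_zero.mp hrr)).symm

end IsMoorePenrose

section perpProj

variable {ι : Type*} [Fintype ι] [DecidableEq ι]

noncomputable def perpProj (e : ι → ℝ) : Matrix ι ι ℝ := 1 - (e ⬝ᵥ e)⁻¹ • vecMulVec e e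

theorem perpProj_mul (e : ι → ℝ) (M : Matrix ι ι ℝ) :
    perpProj e * M = M - (e ⬝ᵥ e)⁻¹ • vecMulVec e (e ᵥ* M) := by
  rw [perpProj, sub_mul, one_mul, smul_mul_assoc, vecMulVec_mul]

theorem mul_perpProj (e : ι → ℝ) (M : Matrix ι ι ℝ) :
    M * perpProj e = M - (e ⬝ᵥ e)⁻¹ • vecMulVec (M *ᵥ e) e := by
  rw [perpProj, mul_sub, mul_one, mul_smul_comm, mul_vecMulVec]

theorem transpose_perpProj (e : ι → ℝ) : (perpProj e)ᵀ = perpProj e := by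
  simp [perpProj, transpose_vecMulVec]

variable {e : ι → ℝ}

theorem perpProj_mulVec_self (he : e ⬝ᵥ e ≠ 0) : perpProj e *ᵥ e = 0 := by
  rw [perpProj, sub_mulVec, one_mulVec, smul_mulVec, vecMulVec_mulVec, op_smul_eq_smul, smul_smul,
    inv_mul_cancel₀ he, one_smul, sub_self]

theorem vecMul_perpProj_self (he : e ⬝ᵥ e ≠ 0) : e ᵥ* perpProj e = 0 := by
  rw [perpProj, vecMul_sub, vecMul_one, vecMul_smul, vecMul_vecMulVec, smul_smul,
    inv_mul_cancel₀ he, one_smul, sub_self]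

theorem perpProj_mul_self (he : e ⬝ᵥ e ≠ 0) : perpProj e * perpProj e = perpProj e := by
  rw [perpProj_mul, vecMul_perpProj_self he, vecMulVec_zero, smul_zero, sub_zero]

theorem perpProj_mul_comm {M : Matrix ι ι ℝ} (hM : Mᵀ = M) (hMe : M *ᵥ e = e) :
    perpProj e * M = M * perpProj e := by
  rw [perpProj_mul, mul_perpProj, ← mulVec_transpose, hM, hMe]

end perpProj

theorem IsMoorePenrose.perpProj_mul_mul_perpProj {n : ℕ} {A X : Matrix (Fin n) (Fin n) ℝ}
    (h : IsMoorePenrose A X) {e : Fin n → ℝ} (hAX : (A * X) *ᵥ e = e)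
    (hXA : e ᵥ* (X * A) = e) (hβ : e ⬝ᵥ (X *ᵥ e) ≠ 0) :
    IsMoorePenrose (perpProj e * A * perpProj e)
      (X - (e ⬝ᵥ (X *ᵥ e))⁻¹ • vecMulVec (X *ᵥ e) (e ᵥ* X)) := by
  obtain ⟨h₁, h₂, h₃, h₄⟩ := h
  set P := perpProj e
  set β := e ⬝ᵥ (X *ᵥ e)
  set E := X - β⁻¹ • vecMulVec (X *ᵥ e) (e ᵥ* X)
  have he : e ⬝ᵥ e ≠ 0 := fun h ↦ hβ (by simp [dotProduct_self_eq_zero.mp h, β])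
  have hvβ : (e ᵥ* X) ⬝ᵥ e = β := (dotProduct_mulVec e X e).symm
  have hEe : E *ᵥ e = 0 := by
    rw [sub_mulVec, smul_mulVec, vecMulVec_mulVec, hvβ, op_smul_eq_smul, smul_smul,
      inv_mul_cancel₀ hβ, one_smul, sub_self]
  have heE : e ᵥ* E = 0 := by
    rw [vecMul_sub, vecMul_smul, vecMul_vecMulVec, smul_smul, inv_mul_cancel₀ hβ, one_smul,
      sub_self]
  have hPM : P * (A * X) = A * X * P := perpProj_mul_comm h₃ hAX
  have hPN : P * (X * A) = X * A * P :=
    perpProj_mul_comm h₄ (by rw [← vecMul_transpose, h₄, hXA])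
  have hEP : E * P = E := by
    rw [mul_perpProj e E, hEe, zero_vecMulVec, smul_zero, sub_zero]
  have hPE : P * E = E := by
    rw [perpProj_mul e E, heE, vecMulVec_zero, smul_zero, sub_zero]
  have hleft : P * A * P * E = P * (A * X) := by
    rw [mul_assoc, hPE, mul_assoc, mul_sub, mul_smul_comm, mul_vecMulVec, mulVec_mulVec, hAX,
      mul_sub, mul_smul_comm, mul_vecMulVec, perpProj_mulVec_self he, zero_vecMulVec, smul_zero,
      sub_zero]
  have hright : E * (P * A * P) = X * A * P := by
    rw [← mul_assoc, ← mul_assoc, hEP, sub_mul, smul_mul_assoc, vecMulVec_mul, vecMul_vecMul, hXA,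
      sub_mul, smul_mul_assoc, vecMulVec_mul, vecMul_perpProj_self he, vecMulVec_zero, smul_zero,
      sub_zero]
  refine ⟨?_, ?_, ?_, ?_⟩
  · calc P * A * P * E * (P * A * P) = P * (A * X * P) * A * P := by
          rw [hleft]; simp only [mul_assoc]
      _ = P * P * (A * X * A) * P := by rw [← hPM]; simp only [mul_assoc]
      _ = P * A * P := by rw [perpProj_mul_self he, h₁]
  · rw [hright, mul_assoc, hPE, mul_sub, mul_smul_comm, mul_vecMulVec, mulVec_mulVec, h₂]
  · rw [hleft, transpose_mul, h₃, transpose_perpProj, hPM]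
  · rw [hright, transpose_mul, transpose_perpProj, h₄, hPN]

section GEDM

variable {ι : Type*} {L D : Matrix ι ι ℝ} {a b : ℝ}

def IsGEDM (L : Matrix ι ι ℝ) (a b : ℝ) (D : Matrix ι ι ℝ) : Prop :=
  ∀ i j, D i j = a ^ 2 * L i i + b ^ 2 * L j j - 2 * a * b * L i j

namespace IsGEDM

theorem eq_vecMulVec (hD : IsGEDM L a b D) :
    D = a ^ 2 • vecMulVec L.diag 1 + b ^ 2 • vecMulVec 1 L.diag - (2 * a * b) • L := by
  ext i j
  simp [hD i j]

theorem transpose (hD : IsGEDM L a b D) (hL : Lᵀ = L) : IsGEDM L b a Dᵀ := by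
  intro i j
  rw [transpose_apply, hD j i, ← transpose_apply L i j, hL]
  ring

variable [Fintype ι]

/-- Testing `yᵀ D = 0` against `1` and against `y` gives `n a² (yᵀℓ) + b² tr L (yᵀ1) = 0` and
`(a² + b²) (yᵀℓ) (yᵀ1) = 2ab yᵀLy ≥ 0`, where `ℓ = diag L`; together they force `yᵀ1 = 0`. -/
theorem dotProduct_one_eq_zero_of_vecMul_eq_zero (hD : IsGEDM L a b D) (hL : L.PosSemidef)
    (hL1 : L *ᵥ 1 = 0) (htr : 0 < L.trace) (hab : 0 ≤ a * b) (hb : b ≠ 0) {y : ι → ℝ}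
    (hy : y ᵥ* D = 0) : y ⬝ᵥ 1 = 0 := by
  have h1 : y ⬝ᵥ D *ᵥ 1 = 0 := by rw [dotProduct_mulVec, hy, zero_dotProduct]
  have h2 : y ⬝ᵥ D *ᵥ y = 0 := by rw [dotProduct_mulVec, hy, zero_dotProduct]
  rw [hD.eq_vecMulVec] at h1 h2
  simp only [add_mulVec, sub_mulVec, smul_mulVec, vecMulVec_mulVec, op_smul_eq_smul,
    dotProduct_add, dotProduct_sub, dotProduct_smul, hL1, dotProduct_zero, smul_eq_mul] at h1 h2
  rw [mul_zero, sub_zero] at h1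
  rw [dotProduct_comm 1 y, dotProduct_comm L.diag y] at h2
  have hτ : L.diag ⬝ᵥ 1 = L.trace := by simp [trace, dotProduct]
  have hq : 0 ≤ y ⬝ᵥ L *ᵥ y := by simpa using hL.dotProduct_mulVec_nonneg y
  set N := (1 : ι → ℝ) ⬝ᵥ 1
  have hN : 0 ≤ N := by simp [N]
  have hs : (a ^ 2 + b ^ 2) * b ^ 2 * L.trace * (y ⬝ᵥ 1) ^ 2
      = -(N * a ^ 2 * (2 * (a * b)) * (y ⬝ᵥ L *ᵥ y)) := by
    rw [← hτ]
    linear_combination (a ^ 2 + b ^ 2) * (y ⬝ᵥ 1) * h1 - N * a ^ 2 * h2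
  have hcoef : 0 < (a ^ 2 + b ^ 2) * b ^ 2 * L.trace := by positivity
  have : 0 ≤ N * a ^ 2 * (2 * (a * b)) * (y ⬝ᵥ L *ᵥ y) := by positivity
  exact pow_eq_zero_iff two_ne_zero |>.mp (le_antisymm (by nlinarith) (sq_nonneg _))

variable [DecidableEq ι]

theorem perpProj_one_mul_mul_perpProj_one (hD : IsGEDM L a b D) (hL : Lᵀ = L)
    (hL1 : L *ᵥ 1 = 0) : perpProj 1 * D * perpProj 1 = -(2 * a * b) • L := by
  cases isEmpty_or_nonempty ι
  · exact Subsingleton.elim _ _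
  have he : (1 : ι → ℝ) ⬝ᵥ 1 ≠ 0 := by simp
  have h1L : 1 ᵥ* L = 0 := by rw [← mulVec_transpose, hL, hL1]
  have hℓ1 : perpProj 1 * vecMulVec L.diag 1 * perpProj 1 = 0 := by
    rw [mul_vecMulVec, vecMulVec_mul, vecMul_perpProj_self he, vecMulVec_zero]
  have h1ℓ : perpProj 1 * vecMulVec 1 L.diag = 0 := by
    rw [mul_vecMulVec, perpProj_mulVec_self he, zero_vecMulVec]
  have hPLP : perpProj 1 * L * perpProj 1 = L := by
    rw [perpProj_mul, h1L, vecMulVec_zero, smul_zero, sub_zero, mul_perpProj, hL1, zero_vecMulVec,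
      smul_zero, sub_zero]
  rw [hD.eq_vecMulVec]
  simp only [mul_add, mul_sub, add_mul, sub_mul, mul_smul_comm, smul_mul_assoc, hℓ1, h1ℓ, hPLP,
    zero_mul, smul_zero, zero_add, zero_sub, neg_smul]

end IsGEDM

end GEDM

/-- For a circum GEDM `D` (i.e. `1ᵀ D† 1 > 0`):
`D† = -(1/(2ab)) L† + (1/(1ᵀD†1)) (D†1)(1ᵀD†)`. -/
theorem stmt18 (n : ℕ) (L D : Matrix (Fin n) (Fin n) ℝ) (hL : L.PosSemidef)
    (hL1 : L *ᵥ (fun _ => (1 : ℝ)) = 0) (hL0 : L ≠ 0)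
    (a b : ℝ) (ha : 0 < a) (hb : 0 < b)
    (hD : ∀ i j, D i j = a ^ 2 * L i i + b ^ 2 * L j j - 2 * a * b * L i j)
    (Dp : Matrix (Fin n) (Fin n) ℝ) (hDp : IsMoorePenrose D Dp)
    (Lp : Matrix (Fin n) (Fin n) ℝ) (hLp : IsMoorePenrose L Lp)
    (hcirc : 0 < (fun _ => (1 : ℝ)) ⬝ᵥ (Dp *ᵥ fun _ => (1 : ℝ))) :
    Dp = -(1 / (2 * a * b)) • Lp +
      (1 / ((fun _ => (1 : ℝ)) ⬝ᵥ (Dp *ᵥ fun _ => (1 : ℝ)))) •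
        Matrix.vecMulVec (Dp *ᵥ fun _ => (1 : ℝ)) ((fun _ => (1 : ℝ)) ᵥ* Dp) := by
  have hGEDM : IsGEDM L a b D := hD
  have hLt : Lᵀ = L := hL.isHermitian
  have htr : 0 < L.trace := hL.trace_nonneg.lt_of_ne' (mt hL.trace_eq_zero_iff.mp hL0)
  have hrange : (D * Dp) *ᵥ 1 = 1 := hDp.mul_mulVec_eq_self fun _ ↦
    hGEDM.dotProduct_one_eq_zero_of_vecMul_eq_zero hL hL1 htr (by positivity) hb.ne'
  have hcorange : 1 ᵥ* (Dp * D) = 1 := by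
    rw [← mulVec_transpose, transpose_mul]
    exact hDp.transpose.mul_mulVec_eq_self fun _ ↦
      (hGEDM.transpose hLt).dotProduct_one_eq_zero_of_vecMul_eq_zero hL hL1 htr (by positivity)
        ha.ne'
  have hE := hDp.perpProj_mul_mul_perpProj hrange hcorange hcirc.ne'
  rw [hGEDM.perpProj_one_mul_mul_perpProj_one hLt hL1] at hE
  have hc : 2 * a * b ≠ 0 := by positivity
  have hk : -(2 * a * b) ≠ 0 := neg_ne_zero.mpr hc
  have hLE := hE.smul (inv_ne_zero hk)
  rw [smul_smul, inv_mul_cancel₀ hk, one_smul, inv_inv] at hLE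
  simp only [← Pi.one_def]
  rw [← hLE.unique hLp, smul_smul, neg_mul_neg, one_div, inv_mul_cancel₀ hc, one_smul, one_div]
  abel
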